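/- A linear map Λ: M_n(ℂ) → M_n(ℂ) that is n-positive is completely positive, i.e., 1_k ⊗ Λ is positive for all k ≥ 1. -/

import Mathlib

/-!
Write `x ∈ ℂ^k ⊗ ℂ^n` as `x = (V ⊗ 1) Ω`, where `V` is the `k × n` matrix of coefficients of `x`
and `Ω = ∑ₐ eₐ ⊗ eₐ ∈ ℂ^n ⊗ ℂ^n`; this is the statement that `x` has Schmidt rank at most `n`.
Since `1 ⊗ Λ` commutes with left and right multiplication by matrices of the form `V ⊗ 1`,
`⟪x, (1_k ⊗ Λ)(M) x⟫ = ⟪Ω, (1_n ⊗ Λ)((V ⊗ 1)ᴴ M (V ⊗ 1)) Ω⟫ ≥ 0` by `n`-positivity.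
Over `ℂ` a nonnegative quadratic form already forces the matrix to be Hermitian.
-/

open scoped BigOperators ComplexOrder

/-- The ampliation `1_k ⊗ Λ` of a linear map `Λ : M_n(ℂ) → M_n(ℂ)`, acting on
matrices on `ℂ^k ⊗ ℂ^n` blockwise. -/
def amp (k n : ℕ)
    (Λ' : Matrix (Fin n) (Fin n) ℂ →ₗ[ℂ] Matrix (Fin n) (Fin n) ℂ)
    (M : Matrix (Fin k × Fin n) (Fin k × Fin n) ℂ) :
    Matrix (Fin k × Fin n) (Fin k × Fin n) ℂ :=
  Matrix.of fun p q => Λ' (Matrix.of fun r s => M (p.1, r) (q.1, s)) p.2 q.2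

open Matrix
open scoped Kronecker

namespace Matrix

theorem posSemidef_of_forall_dotProduct_mulVec_nonneg {ι : Type*} [Fintype ι] [DecidableEq ι]
    {A : Matrix ι ι ℂ} (hA : ∀ x, 0 ≤ star x ⬝ᵥ (A *ᵥ x)) : A.PosSemidef := by
  rw [← isPositive_toEuclideanLin_iff, LinearMap.isPositive_iff_complex]
  intro x
  obtain ⟨hre, him⟩ := Complex.nonneg_iff.mp (hA x.ofLp)
  have hconj : x.ofLp ⬝ᵥ star (A *ᵥ x.ofLp) = star (star x.ofLp ⬝ᵥ (A *ᵥ x.ofLp)) := by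
    rw [star_dotProduct, star_star, dotProduct_comm]
  simp [EuclideanSpace.inner_eq_star_dotProduct, hconj, Complex.ext_iff, hre, ← him]

theorem star_mulVec_dotProduct_mulVec_mulVec {R ι κ : Type*} [CommSemiring R] [StarRing R]
    [Fintype ι] [Fintype κ] (A : Matrix ι ι R) (B : Matrix ι κ R) (x : κ → R) :
    star (B *ᵥ x) ⬝ᵥ (A *ᵥ (B *ᵥ x)) = star x ⬝ᵥ ((Bᴴ * A * B) *ᵥ x) := by
  simp only [star_mulVec, dotProduct_mulVec, vecMul_vecMul, Matrix.mul_assoc]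

theorem kronecker_one_mulVec_vec_one {R ι κ : Type*} [CommSemiring R] [Fintype κ]
    [DecidableEq κ] (x : ι × κ → R) :
    (of (Function.curry x) ⊗ₖ (1 : Matrix κ κ R)) *ᵥ vec 1 = x := by
  rw [kronecker_mulVec_vec, Matrix.one_mul, Matrix.one_mul]
  rfl

end Matrix

theorem amp_kronecker_one_mul_mul {n k m : ℕ}
    (Λ' : Matrix (Fin n) (Fin n) ℂ →ₗ[ℂ] Matrix (Fin n) (Fin n) ℂ)
    (V : Matrix (Fin m) (Fin k) ℂ) (W : Matrix (Fin k) (Fin m) ℂ)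
    (M : Matrix (Fin k × Fin n) (Fin k × Fin n) ℂ) :
    amp m n Λ' ((V ⊗ₖ (1 : Matrix (Fin n) (Fin n) ℂ)) * M *
        (W ⊗ₖ (1 : Matrix (Fin n) (Fin n) ℂ))) =
      (V ⊗ₖ (1 : Matrix (Fin n) (Fin n) ℂ)) * amp k n Λ' M *
        (W ⊗ₖ (1 : Matrix (Fin n) (Fin n) ℂ)) := by
  ext ⟨a, r⟩ ⟨b, s⟩
  have hblock : (of fun r s => ((V ⊗ₖ (1 : Matrix (Fin n) (Fin n) ℂ)) * M *
        (W ⊗ₖ (1 : Matrix (Fin n) (Fin n) ℂ))) (a, r) (b, s)) =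
      ∑ p : Fin k, ∑ q : Fin k,
        (V a p * W q b) • (of fun r s => M (p, r) (q, s) : Matrix (Fin n) (Fin n) ℂ) := by
    ext r s
    simp only [mul_apply, kroneckerMap_apply, one_apply, mul_ite, mul_one, mul_zero, ite_mul,
      zero_mul, Fintype.sum_prod_type, Finset.sum_ite_eq, Finset.sum_ite_eq', Finset.mem_univ,
      ↓reduceIte, Finset.sum_mul, mul_right_comm, of_apply, smul_of, Matrix.sum_apply,
      Pi.smul_apply, smul_eq_mul]
    exact Finset.sum_comm
  simp only [amp, of_apply]
  rw [hblock]
  simp only [map_sum, map_smul, Matrix.sum_apply, Matrix.smul_apply, smul_eq_mul, mul_apply,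
    kroneckerMap_apply, one_apply, mul_ite, mul_one, mul_zero, of_apply, ite_mul, zero_mul,
    Fintype.sum_prod_type, Finset.sum_ite_eq, Finset.sum_ite_eq', Finset.mem_univ, ↓reduceIte,
    Finset.sum_mul, mul_right_comm]
  exact Finset.sum_comm

/-- A linear map `Λ : M_n(ℂ) → M_n(ℂ)` that is `n`-positive is
completely positive: `1_k ⊗ Λ` is positive for all `k ≥ 1`. -/
theorem stmt_16 (n : ℕ)
    (Λ' : Matrix (Fin n) (Fin n) ℂ →ₗ[ℂ] Matrix (Fin n) (Fin n) ℂ)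
    (hnpos : ∀ M : Matrix (Fin n × Fin n) (Fin n × Fin n) ℂ,
        M.PosSemidef → (amp n n Λ' M).PosSemidef) :
    ∀ k : ℕ, 1 ≤ k → ∀ M : Matrix (Fin k × Fin n) (Fin k × Fin n) ℂ,
      M.PosSemidef → (amp k n Λ' M).PosSemidef := by
  intro k _ M hM
  refine posSemidef_of_forall_dotProduct_mulVec_nonneg fun x => ?_
  set V : Matrix (Fin k) (Fin n) ℂ := of (Function.curry x)
  have hcompressed := hnpos _ (hM.conjTranspose_mul_mul_same (V ⊗ₖ 1))
  rw [conjTranspose_kronecker, conjTranspose_one, amp_kronecker_one_mul_mul] at hcompressed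
  rw [← kronecker_one_mulVec_vec_one x, star_mulVec_dotProduct_mulVec_mulVec,
    conjTranspose_kronecker, conjTranspose_one]
  exact hcompressed.dotProduct_mulVec_nonneg _
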